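/- arXiv:1406.1538 — 4 statements merged into one kernel-verified Lean document; each statement's English description precedes it below -/
import Mathlib

section
/- For every real numbers t and x, the series ∑_{n=0}^{∞} (t^n / n!) h_n(x) converges and its sum equals exp(t x − t²/2). -/
/-!
Expanding `exp (t * x - t ^ 2 / 2) = exp (t * x) * exp (-t ^ 2 / 2)` as a Cauchy product of the
two exponential series (the second one in powers of `t`, so supported on even exponents), the
coefficient of `t ^ n` is `∑ (x ^ k / k!) * (-1 / 2) ^ m / m!` over `k + 2 * m = n`; by the explicit
formula for the coefficients of the Hermite polynomials this is `hₙ(x) / n!`.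
-/

open Function Polynomial Finset
open scoped Nat

lemma Nat.factorial_two_mul (m : ℕ) : (2 * m)! = 2 ^ m * m ! * (2 * m - 1)‼ := by
  cases m with
  | zero => rfl
  | succ m =>
    rw [show 2 * (m + 1) = (2 * m + 1) + 1 by ring, Nat.factorial_eq_mul_doubleFactorial,
      Nat.add_sub_cancel, show 2 * m + 1 + 1 = 2 * (m + 1) by ring, Nat.doubleFactorial_two_mul]

lemma Real.hasSum_pow_div_factorial (y : ℝ) : HasSum (fun n : ℕ => y ^ n / n !) (Real.exp y) :=
  Real.exp_eq_exp_ℝ ▸ NormedSpace.expSeries_div_hasSum_exp y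

lemma Function.Injective.summable_norm_extend_zero {ι κ E : Type*} [SeminormedAddCommGroup E]
    {g : ι → κ} (hg : Injective g) {f : ι → E} (hf : Summable fun i => ‖f i‖) :
    Summable fun j => ‖extend g f 0 j‖ := by
  simp_rw [apply_extend norm, comp_def, Pi.zero_apply, norm_zero]
  exact (summable_extend_zero hg).2 hf

namespace Polynomial

lemma coeff_hermite_two_mul_add_mul_factorial (m k : ℕ) :
    (hermite (2 * m + k)).coeff k * (k ! * (2 ^ m * m !)) = (-1) ^ m * (2 * m + k)! := by
  have hfac : (2 * m + k)! = (2 * m + k).choose k * (2 ^ m * m ! * (2 * m - 1)‼) * k ! := by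
    rw [← Nat.factorial_two_mul, Nat.add_choose_mul_factorial_mul_factorial]
  rw [coeff_hermite_explicit, hfac]
  push_cast
  ring

lemma pow_div_factorial_mul_coeff_hermite (t x : ℝ) {n k : ℕ} (hk : k ≤ n) :
    t ^ n / n ! * ((hermite n).coeff k * x ^ k) =
      (t * x) ^ k / k ! * extend (2 * ·) (fun m : ℕ => (-t ^ 2 / 2) ^ m / m !) 0 (n - k) := by
  rcases Nat.even_or_odd (n - k) with ⟨m, hm⟩ | hodd
  · obtain rfl : n = 2 * m + k := by omega
    rw [show 2 * m + k - k = 2 * m by omega,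
      (mul_right_injective₀ two_ne_zero).extend_apply]
    have hcoeff : ((hermite (2 * m + k)).coeff k : ℝ) =
        (-1) ^ m * (2 * m + k)! / (k ! * (2 ^ m * m !)) := by
      rw [eq_div_iff (by positivity)]
      exact_mod_cast coeff_hermite_two_mul_add_mul_factorial m k
    have hpow : (-t ^ 2 / 2) ^ m = (-1) ^ m * t ^ (2 * m) / 2 ^ m := by
      rw [div_pow, neg_pow, ← pow_mul]
    rw [hcoeff, hpow, pow_add]
    field_simp
    ring
  · have hcoeff : (hermite n).coeff k = 0 := coeff_hermite_of_odd_add (by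
      rw [Nat.odd_add', ← Nat.odd_sub' hk]; exact hodd)
    have hnot_even : ¬∃ m, 2 * m = n - k := fun ⟨m, hm⟩ =>
      Nat.not_even_iff_odd.2 hodd ⟨m, by omega⟩
    simp [hcoeff, extend_apply' _ _ _ hnot_even]

end Polynomial

/-- For every real `t` and `x`, the series
`∑ n, (t^n / n!) * hₙ(x)` (where `hₙ` is the probabilists' Hermite polynomial)
converges with sum `exp (t*x - t^2/2)`. -/
theorem hermite_generating_function (t x : ℝ) :
    HasSum (fun n : ℕ => t ^ n / n.factorial * Polynomial.aeval x (Polynomial.hermite n))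
      (Real.exp (t * x - t ^ 2 / 2)) := by
  have h2 : Injective (2 * · : ℕ → ℕ) := mul_right_injective₀ two_ne_zero
  have hcauchy := hasSum_sum_range_mul_of_summable_norm
    (NormedSpace.norm_expSeries_div_summable (t * x))
    (h2.summable_norm_extend_zero (NormedSpace.norm_expSeries_div_summable (-t ^ 2 / 2)))
  rw [(Real.hasSum_pow_div_factorial _).tsum_eq,
    ((hasSum_extend_zero h2).2 (Real.hasSum_pow_div_factorial _)).tsum_eq, ← Real.exp_add,
    show t * x + -t ^ 2 / 2 = t * x - t ^ 2 / 2 by ring] at hcauchy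
  refine hcauchy.congr_fun fun n => ?_
  rw [aeval_eq_sum_range, natDegree_hermite, mul_sum]
  refine sum_congr rfl fun k hk => ?_
  rw [zsmul_eq_mul, pow_div_factorial_mul_coeff_hermite t x (Nat.lt_succ_iff.1 (mem_range.1 hk))]
end

section
/- For every real number s ≥ 0 and every natural number p, the series (−i)^p ∑_{n=0}^{∞} (s^n/n!) ∑_{k=0}^{2n} i^k · b_{2n,k} · (d^p/dz^p)(e^{iz} z^k)│_{z=0} converges and its sum equals exp(p² s). (With s = T^{2H}σ²/2 this identity recovers the p-th moment exp(p² T^{2H}σ²/2) of a lognormal(0, T^{2H}σ²) random variable from the divergent power-series representation of its characteristic function.) -/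
/-!
Since `(d/dz)^p (e^{iz} z^k)` at `0` is `i^(p-k) p!/(p-k)!` for `k ≤ p` and `0` otherwise,
the inner sum is `i^p ∑_k b_{2n,k} p(p-1)⋯(p-k+1) = i^p p^{2n}`, the expansion of a power in
falling factorials.
Hence the `n`-th term is `(p² s)^n / n!`, and the series is that of `exp (p² s)`.
-/

/-- The Stirling numbers of the second kind `b j k`, defined by
`b 0 0 = 1`, `b j 0 = 0` for `j ≥ 1`, `b 0 k = 0` for `k ≥ 1`, and
`b (j+1) (k+1) = (k+1) * b j (k+1) + b j k`. -/
def stirling2 : ℕ → ℕ → ℕ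
  | 0, 0 => 1
  | 0, _ + 1 => 0
  | _ + 1, 0 => 0
  | j + 1, k + 1 => (k + 1) * stirling2 j (k + 1) + stirling2 j k

theorem stirling2_eq_stirlingSecond : stirling2 = Nat.stirlingSecond := by
  ext j k
  induction j generalizing k with
  | zero => cases k <;> rfl
  | succ j ih => cases k <;> simp [stirling2, Nat.stirlingSecond_succ_succ, ih]

theorem Nat.mul_descFactorial (x k : ℕ) :
    x * x.descFactorial k = x.descFactorial (k + 1) + k * x.descFactorial k := by
  rcases le_or_gt k x with h | h
  · rw [Nat.descFactorial_succ, ← add_mul, Nat.sub_add_cancel h]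
  · simp [Nat.descFactorial_eq_zero_iff_lt.mpr h]

theorem Nat.sum_stirlingSecond_mul_descFactorial (m x : ℕ) :
    ∑ k ∈ Finset.range (m + 1), stirlingSecond m k * x.descFactorial k = x ^ m := by
  induction m with
  | zero => simp
  | succ m ih =>
    have shift : ∑ k ∈ Finset.range (m + 1), k * stirlingSecond m k * x.descFactorial k =
        ∑ k ∈ Finset.range (m + 1), (k + 1) * stirlingSecond m (k + 1) *
          x.descFactorial (k + 1) := by
      rw [Finset.sum_range_succ', Finset.sum_range_succ _ m,
        stirlingSecond_eq_zero_of_lt m.lt_succ_self]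
      simp
    calc ∑ k ∈ Finset.range (m + 2), stirlingSecond (m + 1) k * x.descFactorial k
        = ∑ k ∈ Finset.range (m + 1), ((k + 1) * stirlingSecond m (k + 1) *
            x.descFactorial (k + 1) + stirlingSecond m k * x.descFactorial (k + 1)) := by
          rw [Finset.sum_range_succ']
          simp only [stirlingSecond_succ_succ, stirlingSecond_succ_zero, add_mul, zero_mul,
            add_zero]
      _ = ∑ k ∈ Finset.range (m + 1), k * stirlingSecond m k * x.descFactorial k +
            ∑ k ∈ Finset.range (m + 1), stirlingSecond m k * x.descFactorial (k + 1) := by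
          rw [Finset.sum_add_distrib, shift]
      _ = ∑ k ∈ Finset.range (m + 1), stirlingSecond m k * (x * x.descFactorial k) := by
          rw [← Finset.sum_add_distrib]
          exact Finset.sum_congr rfl fun k _ => by rw [Nat.mul_descFactorial]; ring
      _ = x ^ (m + 1) := by
          rw [pow_succ', ← ih, Finset.mul_sum]
          exact Finset.sum_congr rfl fun k _ => by ring

open Complex

theorem iteratedDeriv_cexp_const_mul_mul_pow_zero (c : ℂ) (p k : ℕ) :
    iteratedDeriv p (fun z => exp (c * z) * z ^ k) 0 = p.descFactorial k * c ^ (p - k) := by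
  rw [iteratedDeriv_fun_mul (by fun_prop) (by fun_prop)]
  simp only [iteratedDeriv_cexp_const_mul, iteratedDeriv_fun_pow_zero, mul_zero, exp_zero,
    mul_one]
  rcases le_or_gt k p with h | h
  · rw [Finset.sum_eq_single (p - k)]
    · rw [Nat.sub_sub_self h, if_pos rfl, Nat.choose_symm h,
        Nat.descFactorial_eq_factorial_mul_choose]
      push_cast
      ring
    · intro j hj hne
      rw [Finset.mem_range] at hj
      rw [if_neg (by omega), Nat.cast_zero, mul_zero]
    · intro hk
      exact absurd (Finset.mem_range.mpr (by omega)) hk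
  · rw [Nat.descFactorial_eq_zero_iff_lt.mpr h]
    refine (Finset.sum_eq_zero fun j hj => ?_).trans (by simp)
    rw [Finset.mem_range] at hj
    rw [if_neg (by omega), Nat.cast_zero, mul_zero]

theorem pow_mul_iteratedDeriv_cexp_const_mul_mul_pow_zero (c : ℂ) (p k : ℕ) :
    c ^ k * iteratedDeriv p (fun z => exp (c * z) * z ^ k) 0 = p.descFactorial k * c ^ p := by
  rw [iteratedDeriv_cexp_const_mul_mul_pow_zero]
  rcases le_or_gt k p with h | h
  · rw [← pow_mul_pow_sub c h]
    ring
  · simp [Nat.descFactorial_eq_zero_iff_lt.mpr h]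

theorem sum_pow_mul_stirlingSecond_mul_iteratedDeriv_cexp_const_mul_mul_pow_zero
    (c : ℂ) (p m : ℕ) :
    ∑ k ∈ Finset.range (m + 1), c ^ k * (Nat.stirlingSecond m k : ℂ) *
        iteratedDeriv p (fun z => exp (c * z) * z ^ k) 0 = c ^ p * (p : ℂ) ^ m := by
  have hterm (k : ℕ) : c ^ k * (Nat.stirlingSecond m k : ℂ) *
      iteratedDeriv p (fun z => exp (c * z) * z ^ k) 0 =
        c ^ p * ((Nat.stirlingSecond m k * p.descFactorial k : ℕ) : ℂ) := by
    rw [mul_right_comm, pow_mul_iteratedDeriv_cexp_const_mul_mul_pow_zero]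
    push_cast
    ring
  simp only [hterm, ← Finset.mul_sum, ← Nat.cast_sum, Nat.sum_stirlingSecond_mul_descFactorial,
    Nat.cast_pow]

theorem hasSum_lognormal_moment_general (s : ℝ) (p : ℕ) :
    HasSum
      (fun n : ℕ => (-Complex.I) ^ p * ((s : ℂ) ^ n / n.factorial) *
        ∑ k ∈ Finset.range (2 * n + 1),
          Complex.I ^ k * (stirling2 (2 * n) k : ℂ) *
            iteratedDeriv p (fun z : ℂ => Complex.exp (Complex.I * z) * z ^ k) 0)
      ((Real.exp ((p : ℝ) ^ 2 * s) : ℝ) : ℂ) := by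
  have hterm (n : ℕ) : (-I) ^ p * ((s : ℂ) ^ n / n.factorial) *
      ∑ k ∈ Finset.range (2 * n + 1), I ^ k * (stirling2 (2 * n) k : ℂ) *
        iteratedDeriv p (fun z => exp (I * z) * z ^ k) 0 = ((p : ℂ) ^ 2 * s) ^ n / n.factorial := by
    rw [stirling2_eq_stirlingSecond,
      sum_pow_mul_stirlingSecond_mul_iteratedDeriv_cexp_const_mul_mul_pow_zero]
    have hI : (-I) ^ p * I ^ p = 1 := by simp [← mul_pow]
    linear_combination ((p : ℂ) ^ 2 * s) ^ n / n.factorial * hI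
  simp only [hterm, ofReal_exp]
  push_cast
  rw [exp_eq_exp_ℂ]
  exact NormedSpace.expSeries_div_hasSum_exp _

/-- For every real `s ≥ 0` and natural `p`, the series
`(-i)^p ∑_{n} (s^n/n!) ∑_{k=0}^{2n} i^k b_{2n,k} (d^p/dz^p)(e^{iz} z^k)|_{z=0}`
converges with sum `exp (p² s)`. -/
theorem hasSum_lognormal_moment (s : ℝ) (hs : 0 ≤ s) (p : ℕ) :
    HasSum
      (fun n : ℕ => (-Complex.I) ^ p * ((s : ℂ) ^ n / n.factorial) *
        ∑ k ∈ Finset.range (2 * n + 1),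
          Complex.I ^ k * (stirling2 (2 * n) k : ℂ) *
            iteratedDeriv p (fun z : ℂ => Complex.exp (Complex.I * z) * z ^ k) 0)
      ((Real.exp ((p : ℝ) ^ 2 * s) : ℝ) : ℂ) :=
  hasSum_lognormal_moment_general s p
end

section
/- Let 1/2 < H < 1 and T > 0. Then the iterated integral over the simplex {0 ≤ u₁ ≤ u₂ ≤ v₁ ≤ v₂ ≤ T} of 4(H(2H−1))² (v₁−u₁)^{2H−2}(v₂−u₂)^{2H−2} [ (T−u₂)(T−v₂) + 2(T−v₁)(T−v₂) ] dv₂ du₂ dv₁ du₁ equals ( (8H²+14H−1) / (4(4H+1)(2H+1)(4H−1)) − ((6H+5)/(2H+1)) · ℬ(2H+1, 2H+2) ) · T^{4H+2}. -/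
/-- The Beta function `ℬ(x,y) = ∫₀¹ t^(x-1) (1-t)^(y-1) dt`. -/
noncomputable def betaFn (x y : ℝ) : ℝ :=
  ∫ t in (0 : ℝ)..1, t ^ (x - 1) * (1 - t) ^ (y - 1)

/-!
Integrate from the inside out, writing `a = 2H - 1`. The integrals over `v₂` and then `u₂` are
elementary: they only involve powers of `T - u₂` and `v₁ - u₂`. Multiplied by
`(v₁ - u₁)^(a-1)`, the result is a combination of Beta kernels `(v₁ - u₁)^(p-1) (T - v₁)^(q-1)`,
each of which integrates over `[u₁, T]` to `ℬ(p,q) (T - u₁)^(p+q-1)`, always with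
`p + q - 1 = 2a + 3`. The Beta values with integer second argument are rational. The remaining
one, `ℬ(a, a+4)`, is proportional to `ℬ(a+2, a+3) = ℬ(2H+1, 2H+2)` by the recurrences of `ℬ` in
each argument.
-/

open intervalIntegral Set

section Beta

lemma ofReal_betaFn (x y : ℝ) : (betaFn x y : ℂ) = Complex.betaIntegral x y := by
  rw [betaFn, Complex.betaIntegral, ← intervalIntegral.integral_ofReal]
  refine integral_congr fun t ht => ?_
  rw [uIcc_of_le zero_le_one] at ht
  push_cast
  rw [Complex.ofReal_cpow ht.1, Complex.ofReal_cpow (sub_nonneg.2 ht.2)]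
  push_cast
  rfl

lemma betaFn_eq_Gamma {x y : ℝ} (hx : 0 < x) (hy : 0 < y) :
    betaFn x y = Real.Gamma x * Real.Gamma y / Real.Gamma (x + y) := by
  have h := Complex.betaIntegral_eq_Gamma_mul_div x y (by simpa) (by simpa)
  rw [← ofReal_betaFn, ← Complex.ofReal_add] at h
  simp only [Complex.Gamma_ofReal] at h
  exact_mod_cast h

lemma betaFn_add_one_right {x y : ℝ} (hx : 0 < x) (hy : 0 < y) :
    betaFn x (y + 1) = y / (x + y) * betaFn x y := by
  rw [betaFn_eq_Gamma hx (by positivity), betaFn_eq_Gamma hx hy, ← add_assoc,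
    Real.Gamma_add_one hy.ne', Real.Gamma_add_one (by positivity)]
  have := (Real.Gamma_pos_of_pos (add_pos hx hy)).ne'
  field_simp

lemma betaFn_add_one_left {x y : ℝ} (hx : 0 < x) (hy : 0 < y) :
    betaFn (x + 1) y = x / (x + y) * betaFn x y := by
  rw [betaFn_eq_Gamma (by positivity) hy, betaFn_eq_Gamma hx hy, add_right_comm,
    Real.Gamma_add_one hx.ne', Real.Gamma_add_one (by positivity)]
  have := (Real.Gamma_pos_of_pos (add_pos hx hy)).ne'
  field_simp

lemma betaFn_nat_add_one {x : ℝ} (hx : 0 < x) (n : ℕ) :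
    betaFn x (n + 1) = n.factorial / ∏ j ∈ Finset.range (n + 1), (x + j) := by
  have h := Complex.betaIntegral_eval_nat_add_one_right (u := x) (by simpa) n
  rw [show ((n : ℂ) + 1) = ((n + 1 : ℝ) : ℂ) by push_cast; rfl, ← ofReal_betaFn] at h
  exact_mod_cast h

lemma betaFn_one_right {x : ℝ} (hx : 0 < x) : betaFn x 1 = 1 / x := by
  simpa using betaFn_nat_add_one hx 0

lemma betaFn_two_right {x : ℝ} (hx : 0 < x) : betaFn x 2 = 1 / (x * (x + 1)) := by
  have h := betaFn_nat_add_one hx 1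
  norm_num [Finset.prod_range_succ] at h
  rw [h, one_div, mul_inv, mul_comm]

lemma betaFn_three_right {x : ℝ} (hx : 0 < x) : betaFn x 3 = 2 / (x * (x + 1) * (x + 2)) := by
  have h := betaFn_nat_add_one hx 2
  norm_num [Finset.prod_range_succ] at h
  exact h

end Beta

section Powers

lemma integral_sub_rpow {r : ℝ} (hr : -1 < r) (a b c : ℝ) :
    ∫ x in a..b, (x - c) ^ r = ((b - c) ^ (r + 1) - (a - c) ^ (r + 1)) / (r + 1) := by
  rw [integral_comp_sub_right (· ^ r), integral_rpow (Or.inl hr)]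

lemma integral_rsub_rpow {r : ℝ} (hr : -1 < r) (a b c : ℝ) :
    ∫ x in a..b, (c - x) ^ r = ((c - a) ^ (r + 1) - (c - b) ^ (r + 1)) / (r + 1) := by
  rw [integral_comp_sub_left (· ^ r), integral_rpow (Or.inl hr)]

lemma intervalIntegrable_sub_rpow {r : ℝ} (hr : -1 < r) (a b c : ℝ) :
    IntervalIntegrable (fun x => (x - c) ^ r) MeasureTheory.volume a b := by
  simpa using (intervalIntegrable_rpow' hr (a := a - c) (b := b - c)).comp_sub_right c

lemma intervalIntegrable_rsub_rpow {r : ℝ} (hr : -1 < r) (a b c : ℝ) :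
    IntervalIntegrable (fun x => (c - x) ^ r) MeasureTheory.volume a b := by
  simpa using (intervalIntegrable_rpow' hr (a := c - a) (b := c - b)).comp_sub_left c

lemma integral_sum_rsub_rpow {ι : Type*} (s : Finset ι) (k c r : ι → ℝ)
    (hr : ∀ i ∈ s, -1 < r i) (a b : ℝ) :
    ∫ x in a..b, ∑ i ∈ s, k i * (c i - x) ^ r i
      = ∑ i ∈ s, k i * (((c i - a) ^ (r i + 1) - (c i - b) ^ (r i + 1)) / (r i + 1)) := by
  rw [integral_finsetSum fun i hi =>
    (intervalIntegrable_rsub_rpow (hr i hi) a b (c i)).const_mul _]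
  refine Finset.sum_congr rfl fun i hi => ?_
  rw [integral_const_mul, integral_rsub_rpow (hr i hi)]

end Powers

section BetaKernel

lemma integral_sub_rpow_mul_rsub_rpow {p q u c : ℝ} (h : u < c) :
    ∫ v in u..c, (v - u) ^ (p - 1) * (c - v) ^ (q - 1) = betaFn p q * (c - u) ^ (p + q - 1) := by
  have hX : 0 < c - u := sub_pos.2 h
  have hsub := smul_integral_comp_add_mul (a := 0) (b := 1)
    (fun v => (v - u) ^ (p - 1) * (c - v) ^ (q - 1)) (c - u) u
  simp only [mul_zero, add_zero, mul_one, add_sub_cancel, smul_eq_mul] at hsub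
  rw [← hsub, betaFn, mul_comm _ ((c - u) ^ _), ← integral_const_mul, ← integral_const_mul]
  refine integral_congr fun t ht => ?_
  rw [uIcc_of_le zero_le_one] at ht
  rw [show u + (c - u) * t - u = (c - u) * t by ring,
    show c - (u + (c - u) * t) = (c - u) * (1 - t) by ring,
    Real.mul_rpow hX.le ht.1, Real.mul_rpow hX.le (sub_nonneg.2 ht.2),
    show p + q - 1 = 1 + (p - 1) + (q - 1) by ring, Real.rpow_add hX, Real.rpow_add hX,
    Real.rpow_one]
  ring

lemma intervalIntegrable_sub_rpow_mul_rsub_rpow {p q : ℝ} (hp : 0 < p) (hq : 1 ≤ q)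
    (u c : ℝ) :
    IntervalIntegrable (fun v => (v - u) ^ (p - 1) * (c - v) ^ (q - 1)) MeasureTheory.volume u c :=
  (intervalIntegrable_sub_rpow (by linarith) u c u).mul_continuousOn
    ((continuousOn_const.sub continuousOn_id).rpow_const fun _ _ => Or.inr (by linarith))

lemma integral_sum_sub_rpow_mul_rsub_rpow {ι : Type*} (s : Finset ι) (k p q : ι → ℝ)
    (hp : ∀ i ∈ s, 0 < p i) (hq : ∀ i ∈ s, 1 ≤ q i) {u c : ℝ} (h : u < c) :
    ∫ v in u..c, ∑ i ∈ s, k i * ((v - u) ^ (p i - 1) * (c - v) ^ (q i - 1))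
      = ∑ i ∈ s, k i * (betaFn (p i) (q i) * (c - u) ^ (p i + q i - 1)) := by
  rw [integral_finsetSum fun i hi =>
    (intervalIntegrable_sub_rpow_mul_rsub_rpow (hp i hi) (hq i hi) u c).const_mul _]
  refine Finset.sum_congr rfl fun i _ => ?_
  rw [integral_const_mul, integral_sub_rpow_mul_rsub_rpow h]

end BetaKernel

section Simplex

variable {a : ℝ}

lemma integral_sub_rpow_mul_sub (ha : 0 < a) {u v T : ℝ} (huv : u ≤ v) (hvT : v ≤ T) :
    ∫ x in v..T, (x - u) ^ (a - 1) * (T - x) =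
      ((T - u) ^ (a + 1) - (v - u) ^ (a + 1)) / (a * (a + 1)) - (T - v) * (v - u) ^ a / a := by
  have hsplit : ∀ x ∈ uIcc v T,
      (x - u) ^ (a - 1) * (T - x) = (T - u) * (x - u) ^ (a - 1) - (x - u) ^ a := by
    intro x hx
    rw [uIcc_of_le hvT] at hx
    have h := Real.rpow_add_one' (sub_nonneg.2 (huv.trans hx.1))
      (by simpa using ha.ne' : a - 1 + 1 ≠ 0)
    rw [sub_add_cancel] at h
    rw [h]
    ring
  have hr : -1 < a - 1 := by linarith
  rw [integral_congr hsplit, integral_sub ((intervalIntegrable_sub_rpow hr v T u).const_mul _)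
    (intervalIntegrable_sub_rpow (by linarith) v T u), integral_const_mul, integral_sub_rpow hr,
    integral_sub_rpow (by linarith), sub_add_cancel,
    Real.rpow_add_one' (sub_nonneg.2 (huv.trans hvT)) (by positivity),
    Real.rpow_add_one' (sub_nonneg.2 huv) (by positivity)]
  field_simp
  ring

noncomputable def innerIntegral (a s r : ℝ) : ℝ :=
  ((s + r) ^ (a + 3) - s ^ (a + 3) - r ^ (a + 3)) / (a * (a + 1) * (a + 3))
    + 2 * r * ((s + r) ^ (a + 2) - r ^ (a + 2)) / (a * (a + 1) * (a + 2))
    - (a + 4) * r * s ^ (a + 2) / (a * (a + 1) * (a + 2))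
    - 3 * r ^ 2 * s ^ (a + 1) / (a * (a + 1))

lemma integral_integral_eq_innerIntegral (ha : 0 < a) {u v T : ℝ} (huv : u ≤ v)
    (hvT : v ≤ T) :
    ∫ y in u..v, ∫ x in v..T, (x - y) ^ (a - 1) * ((T - y) * (T - x) + 2 * (T - v) * (T - x))
      = innerIntegral a (v - u) (T - v) := by
  have hinner : ∀ y ∈ uIcc u v,
      (∫ x in v..T, (x - y) ^ (a - 1) * ((T - y) * (T - x) + 2 * (T - v) * (T - x)))
        = ∑ i : Fin 5, ![1 / (a * (a + 1)), 2 * (T - v) / (a * (a + 1)), -1 / (a * (a + 1)),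
            -(a + 4) * (T - v) / (a * (a + 1)), -3 * (T - v) ^ 2 / a] i
            * (![T, T, v, v, v] i - y) ^ ![a + 2, a + 1, a + 2, a + 1, a] i := by
    intro y hy
    rw [uIcc_of_le huv] at hy
    have hL : 0 ≤ T - y := by linarith [hy.2]
    have hd : 0 ≤ v - y := by linarith [hy.2]
    have e1 : (T - y) ^ (a + 2) = (T - y) ^ (a + 1) * (T - y) := by
      rw [show a + 2 = a + 1 + 1 by ring, Real.rpow_add_one' hL (by positivity)]
    have e2 : (v - y) ^ (a + 2) = (v - y) ^ (a + 1) * (v - y) := by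
      rw [show a + 2 = a + 1 + 1 by ring, Real.rpow_add_one' hd (by positivity)]
    have e3 : (v - y) ^ (a + 1) = (v - y) ^ a * (v - y) := Real.rpow_add_one' hd (by positivity)
    simp only [show ∀ x, (x - y) ^ (a - 1) * ((T - y) * (T - x) + 2 * (T - v) * (T - x))
      = ((T - y) + 2 * (T - v)) * ((x - y) ^ (a - 1) * (T - x)) from fun x => by ring,
      integral_const_mul, integral_sub_rpow_mul_sub ha hy.2 hvT, Fin.sum_univ_succ,
      Fin.sum_univ_zero, Matrix.cons_val_zero, Matrix.cons_val_succ, add_zero]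
    rw [e1, e2, e3]
    field_simp
    ring
  rw [integral_congr hinner,
    integral_sum_rsub_rpow _ _ _ _ (fun i _ => by fin_cases i <;> simp <;> linarith)]
  simp only [Fin.sum_univ_succ, Fin.sum_univ_zero, Matrix.cons_val_zero, Matrix.cons_val_succ,
    add_zero, sub_self]
  rw [innerIntegral, show v - u + (T - v) = T - u by ring, show a + 2 + 1 = a + 3 by ring,
    show a + 1 + 1 = a + 2 by ring, Real.zero_rpow (by positivity), Real.zero_rpow (by positivity),
    Real.zero_rpow (by positivity)]
  field_simp
  ring

noncomputable def simplexConst (a : ℝ) : ℝ :=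
  (2 * a ^ 2 + 11 * a + 8) / (2 * a ^ 2 * (a + 1) ^ 2 * (2 * a + 1) * (2 * a + 3))
    - (3 * a + 8) / (a * (a + 1) * (a + 2) * (a + 3)) * betaFn a (a + 4)

lemma rpow_mul_innerIntegral_eq_sum (ha : 0 < a) {s r : ℝ} (hs : 0 ≤ s) (hr : 0 ≤ r) :
    s ^ (a - 1) * innerIntegral a s r
      = ∑ i : Fin 6, ![(s + r) ^ (a + 3) / (a * (a + 1) * (a + 3)),
          2 * (s + r) ^ (a + 2) / (a * (a + 1) * (a + 2)),
          -(3 * a + 8) / (a * (a + 1) * (a + 2) * (a + 3)), -1 / (a * (a + 1) * (a + 3)),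
          -(a + 4) / (a * (a + 1) * (a + 2)), -3 / (a * (a + 1))] i
        * (s ^ (![a, a, a, 2 * a + 3, 2 * a + 2, 2 * a + 1] i - 1)
          * r ^ (![1, 2, a + 4, 1, 2, 3] i - 1)) := by
  have e : ∀ k : ℝ, 1 ≤ k → s ^ (2 * a + k - 1) = s ^ (a - 1) * s ^ (a + k) :=
    fun k hk => by rw [← Real.rpow_add' hs (by linarith)]; ring_nf
  have er : r ^ (a + 3) = r ^ (a + 2) * r := by
    rw [show a + 3 = a + 2 + 1 by ring, Real.rpow_add_one' hr (by positivity)]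
  simp only [Fin.sum_univ_succ, Fin.sum_univ_zero, Matrix.cons_val_zero, Matrix.cons_val_succ,
    add_zero]
  rw [sub_self, Real.rpow_zero, show (2 : ℝ) - 1 = 1 by norm_num, Real.rpow_one,
    show (3 : ℝ) - 1 = 2 by norm_num, Real.rpow_two, show a + 4 - 1 = a + 3 by ring,
    e 3 (by norm_num), e 2 one_le_two, e 1 le_rfl, innerIntegral, er]
  field_simp
  ring

lemma integral_rpow_mul_innerIntegral (ha : 0 < a) {u T : ℝ} (huT : u ≤ T) :
    ∫ v in u..T, (v - u) ^ (a - 1) * innerIntegral a (v - u) (T - v)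
      = simplexConst a * (T - u) ^ (2 * a + 3) := by
  rcases huT.eq_or_lt with rfl | hlt
  · simp [Real.zero_rpow (by positivity : 2 * a + 3 ≠ 0)]
  have hX : 0 < T - u := sub_pos.2 hlt
  have hsum := fun v (hv : v ∈ Icc u T) =>
    rpow_mul_innerIntegral_eq_sum ha (sub_nonneg.2 hv.1) (sub_nonneg.2 hv.2)
  rw [← uIcc_of_le huT] at hsum
  simp only [show ∀ v, v - u + (T - v) = T - u from fun v => by ring] at hsum
  rw [integral_congr hsum, integral_sum_sub_rpow_mul_rsub_rpow _ _ _ _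
    (fun i _ => by fin_cases i <;> simp <;> linarith)
    (fun i _ => by fin_cases i <;> simp; linarith) hlt]
  simp only [Fin.sum_univ_succ, Fin.sum_univ_zero, Matrix.cons_val_zero, Matrix.cons_val_succ,
    add_zero]
  have e : ∀ k : ℝ, (T - u) ^ (a + k) = (T - u) ^ a * (T - u) ^ k :=
    fun k => Real.rpow_add hX a k
  rw [betaFn_one_right ha, betaFn_two_right ha, betaFn_one_right (by positivity),
    betaFn_two_right (by positivity), betaFn_three_right (by positivity),
    show a + 1 - 1 = a by ring, show a + 2 - 1 = a + 1 by ring,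
    show a + (a + 4) - 1 = a + (a + 3) by ring, show 2 * a + 3 + 1 - 1 = a + (a + 3) by ring,
    show 2 * a + 2 + 2 - 1 = a + (a + 3) by ring, show 2 * a + 1 + 3 - 1 = a + (a + 3) by ring,
    simplexConst, show 2 * a + 3 = a + (a + 3) by ring, e (a + 3), e 3, e 2, e 1]
  simp only [Real.rpow_one, Real.rpow_ofNat]
  field_simp
  ring

lemma integral_simplex (ha : 0 < a) {T : ℝ} (hT : 0 ≤ T) (C : ℝ) :
    (∫ u₁ in (0 : ℝ)..T, ∫ v₁ in u₁..T, ∫ u₂ in u₁..v₁, ∫ v₂ in v₁..T,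
        C * (v₁ - u₁) ^ (a - 1) * (v₂ - u₂) ^ (a - 1) *
          ((T - u₂) * (T - v₂) + 2 * (T - v₁) * (T - v₂)))
      = C * simplexConst a * T ^ (2 * a + 4) / (2 * a + 4) := by
  have hinner : ∀ u₁ ∈ uIcc 0 T,
      (∫ v₁ in u₁..T, ∫ u₂ in u₁..v₁, ∫ v₂ in v₁..T,
        C * (v₁ - u₁) ^ (a - 1) * (v₂ - u₂) ^ (a - 1) *
          ((T - u₂) * (T - v₂) + 2 * (T - v₁) * (T - v₂)))
      = C * (simplexConst a * (T - u₁) ^ (2 * a + 3)) := by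
    intro u₁ hu₁
    rw [uIcc_of_le hT] at hu₁
    rw [← integral_rpow_mul_innerIntegral ha hu₁.2, ← integral_const_mul]
    refine integral_congr fun v₁ hv₁ => ?_
    rw [uIcc_of_le hu₁.2] at hv₁
    rw [← integral_integral_eq_innerIntegral ha hv₁.1 hv₁.2]
    simp only [mul_assoc, integral_const_mul]
  rw [integral_congr hinner, integral_const_mul, integral_const_mul,
    integral_rsub_rpow (by linarith), sub_zero, sub_self, Real.zero_rpow (by positivity), sub_zero,
    show 2 * a + 3 + 1 = 2 * a + 4 by ring]
  ring

end Simplex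

theorem integral_simplex_I2_general (H T : ℝ) (hH : 1 / 2 < H) (hT : 0 < T) :
    (∫ u₁ in (0 : ℝ)..T, ∫ v₁ in u₁..T, ∫ u₂ in u₁..v₁, ∫ v₂ in v₁..T,
        4 * (H * (2 * H - 1)) ^ 2 * (v₁ - u₁) ^ (2 * H - 2) * (v₂ - u₂) ^ (2 * H - 2) *
          ((T - u₂) * (T - v₂) + 2 * (T - v₁) * (T - v₂)))
      = ((8 * H ^ 2 + 14 * H - 1) / (4 * (4 * H + 1) * (2 * H + 1) * (4 * H - 1))
          - (6 * H + 5) / (2 * H + 1) * betaFn (2 * H + 1) (2 * H + 2)) * T ^ (4 * H + 2) := by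
  obtain ⟨a, rfl⟩ : ∃ a, H = (a + 1) / 2 := ⟨2 * H - 1, by ring⟩
  have ha : 0 < a := by linarith
  rw [show 2 * ((a + 1) / 2) - 2 = a - 1 by ring, integral_simplex ha hT.le, simplexConst,
    show a + 4 = a + 3 + 1 by ring, betaFn_add_one_right ha (by positivity),
    show 2 * ((a + 1) / 2) + 1 = a + 1 + 1 by ring, show 2 * ((a + 1) / 2) + 2 = a + 3 by ring,
    betaFn_add_one_left (by positivity) (by positivity), betaFn_add_one_left ha (by positivity),
    show 4 * ((a + 1) / 2) + 2 = 2 * a + 4 by ring,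
    show 8 * ((a + 1) / 2) ^ 2 + 14 * ((a + 1) / 2) - 1 = 2 * a ^ 2 + 11 * a + 8 by ring,
    show 4 * ((a + 1) / 2) + 1 = 2 * a + 3 by ring, show 4 * ((a + 1) / 2) - 1 = 2 * a + 1 by ring]
  field_simp
  ring

/-- For `1/2 < H < 1` and `T > 0`, the iterated integral over
the simplex `{0 ≤ u₁ ≤ u₂ ≤ v₁ ≤ v₂ ≤ T}` of
`4(H(2H-1))² (v₁-u₁)^(2H-2)(v₂-u₂)^(2H-2) [(T-u₂)(T-v₂) + 2(T-v₁)(T-v₂)]`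
equals `((8H²+14H-1)/(4(4H+1)(2H+1)(4H-1)) - ((6H+5)/(2H+1)) ℬ(2H+1,2H+2)) T^(4H+2)`. -/
theorem integral_simplex_I2 (H T : ℝ) (hH : 1 / 2 < H) (hH1 : H < 1) (hT : 0 < T) :
    (∫ u₁ in (0 : ℝ)..T, ∫ v₁ in u₁..T, ∫ u₂ in u₁..v₁, ∫ v₂ in v₁..T,
        4 * (H * (2 * H - 1)) ^ 2 * (v₁ - u₁) ^ (2 * H - 2) * (v₂ - u₂) ^ (2 * H - 2) *
          ((T - u₂) * (T - v₂) + 2 * (T - v₁) * (T - v₂)))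
      = ((8 * H ^ 2 + 14 * H - 1) / (4 * (4 * H + 1) * (2 * H + 1) * (4 * H - 1))
          - (6 * H + 5) / (2 * H + 1) * betaFn (2 * H + 1) (2 * H + 2)) * T ^ (4 * H + 2) :=
  integral_simplex_I2_general H T hH hT
end

section
/- Let 1/2 < H < 1, let 0 ≤ r < T, let J ≥ 1 be an integer, and let ε ∈ (0, 1/4]. Set a := T^{2H} − r^{2H} + (T−r)^{2H} and b := (T−r)^H. Then the sequence a_N := ∑_{i=0}^{N} (2N−i)^{(1/4−ε)(2N−i)} · C(N,i)² · (i!)^{1/2} · (N+J−1)! / ( 2^{N−i} (N!)² ) · a^{N−i} · b^{i} tends to 0 as N → ∞. (Consequently any random variable whose iterated fractional Hida Malliavin derivatives of total order N have L² norm bounded by c·N^{(1/4−ε)N} satisfies the paper's Assumption (𝒜).) -/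
/-!
Each summand is at most `(N + J)^J (8 e C N^(-2ε))^N` with `C = max |a| |b|`: bound
`(2N - i)^((1/4 - ε)(2N - i))` by `(2N)^((1/2 - 2ε)N)`, `C(N,i)` by `2^N`, `i!` by `N^N` and
`(N + J - 1)!` by `N! (N + J)^J`; then `N^N ≤ e^N N!` cancels `N^(N/2) N^((1/2 - 2ε)N)` against
the `N!` of the denominator up to the decaying factor `N^(-2εN)`. Once `8 e C N^(-2ε) ≤ 1/2`, the
`N + 1` summands are dominated by a polynomial in `N` times `2^(-N)`.
-/

open Finset Filter Real Nat Topology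

lemma Real.rpow_mul_self_le_rpow_mul_self {e x y : ℝ} (he : 0 ≤ e) (hx : 1 ≤ x) (hxy : x ≤ y) :
    x ^ (e * x) ≤ y ^ (e * y) :=
  calc x ^ (e * x) ≤ y ^ (e * x) := rpow_le_rpow (by linarith) hxy (by positivity)
    _ ≤ y ^ (e * y) := rpow_le_rpow_of_exponent_le (hx.trans hxy) (by gcongr)

lemma Real.natCast_pow_self_le_factorial_mul_exp (n : ℕ) : (n : ℝ) ^ n ≤ n ! * exp 1 ^ n := by
  rw [exp_one_pow, mul_comm, ← div_le_iff₀ (by positivity)]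
  exact pow_div_factorial_le_exp _ n.cast_nonneg n

lemma Nat.factorial_add_sub_one_le (N J : ℕ) : (N + J - 1)! ≤ N ! * (N + J) ^ J :=
  calc (N + J - 1)! ≤ (N + J)! := factorial_le (Nat.sub_le _ _)
    _ = N ! * (N + 1).ascFactorial J := (factorial_mul_ascFactorial N J).symm
    _ ≤ N ! * (N + J) ^ J := Nat.mul_le_mul_left _ (ascFactorial_le_pow_add N J)

lemma two_mul_rpow_mul_rpow_half_le {ε : ℝ} (hε : 0 ≤ ε) {N : ℕ} (hN : 0 < N) :
    (2 * (N : ℝ)) ^ ((1 / 2 - 2 * ε) * N) * (N : ℝ) ^ ((N : ℝ) / 2) ≤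
      N ! * (2 * exp 1 * (N : ℝ) ^ (-(2 * ε))) ^ N := by
  have hn : (0 : ℝ) < N := by exact_mod_cast hN
  have htwo : (2 : ℝ) ^ ((1 / 2 - 2 * ε) * N) ≤ 2 ^ N := by
    rw [← rpow_natCast]
    exact rpow_le_rpow_of_exponent_le one_le_two (by nlinarith)
  have hsplit : (N : ℝ) ^ ((1 / 2 - 2 * ε) * N) * (N : ℝ) ^ ((N : ℝ) / 2) =
      (N : ℝ) ^ N * ((N : ℝ) ^ (-(2 * ε))) ^ N := by
    rw [← rpow_add hn, ← rpow_natCast, ← rpow_natCast, ← rpow_mul hn.le, ← rpow_add hn]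
    ring_nf
  calc (2 * (N : ℝ)) ^ ((1 / 2 - 2 * ε) * N) * (N : ℝ) ^ ((N : ℝ) / 2)
      = 2 ^ ((1 / 2 - 2 * ε) * N) * ((N : ℝ) ^ N * ((N : ℝ) ^ (-(2 * ε))) ^ N) := by
        rw [mul_rpow zero_le_two hn.le, mul_assoc, hsplit]
    _ ≤ 2 ^ N * ((N ! * exp 1 ^ N) * ((N : ℝ) ^ (-(2 * ε))) ^ N) := by
        gcongr
        exact natCast_pow_self_le_factorial_mul_exp N
    _ = N ! * (2 * exp 1 * (N : ℝ) ^ (-(2 * ε))) ^ N := by ring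

noncomputable def assumptionATerm (ε : ℝ) (J : ℕ) (a b : ℝ) (N i : ℕ) : ℝ :=
  (2 * (N : ℝ) - i) ^ ((1 / 4 - ε) * (2 * (N : ℝ) - i)) *
    (N.choose i : ℝ) ^ 2 * (i.factorial : ℝ) ^ ((1 : ℝ) / 2) *
    ((N + J - 1).factorial : ℝ) / ((2 : ℝ) ^ (N - i) * (N.factorial : ℝ) ^ 2) *
    a ^ (N - i) * b ^ i

lemma abs_assumptionATerm (ε : ℝ) (J : ℕ) (a b : ℝ) {N i : ℕ} (hi : i ≤ N) :
    |assumptionATerm ε J a b N i| = assumptionATerm ε J |a| |b| N i := by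
  have hbase : (0 : ℝ) ≤ 2 * N - i := by
    have : (i : ℝ) ≤ N := by exact_mod_cast hi
    linarith [(N.cast_nonneg : (0 : ℝ) ≤ N)]
  simp only [assumptionATerm, abs_mul, abs_div, abs_pow, abs_of_nonneg (rpow_nonneg hbase _),
    abs_of_nonneg (rpow_nonneg (Nat.cast_nonneg _) _), Nat.abs_cast, abs_two]

lemma assumptionATerm_le {ε : ℝ} (hε : 0 ≤ ε) (hε4 : ε ≤ 1 / 4) (J : ℕ) {a b : ℝ} (ha : 0 ≤ a)
    (hb : 0 ≤ b) {N i : ℕ} (hN : 0 < N) (hi : i ≤ N) :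
    assumptionATerm ε J a b N i ≤
      ((N : ℝ) + J) ^ J * (8 * exp 1 * max a b * (N : ℝ) ^ (-(2 * ε))) ^ N := by
  have hkey := two_mul_rpow_mul_rpow_half_le hε hN
  have hshift : ((N + J - 1)! : ℝ) ≤ N ! * ((N : ℝ) + J) ^ J := by
    exact_mod_cast factorial_add_sub_one_le N J
  have hfact : (i ! : ℝ) ≤ (N : ℝ) ^ (N : ℝ) := by
    rw [rpow_natCast]; exact_mod_cast (factorial_le hi).trans (factorial_le_pow N)
  have hchoose : (N.choose i : ℝ) ≤ 2 ^ N := by exact_mod_cast choose_le_two_pow N i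
  have hin : (i : ℝ) ≤ N := by exact_mod_cast hi
  have hn : (1 : ℝ) ≤ N := by exact_mod_cast hN
  set n : ℝ := (N : ℝ)
  have hpow : (2 * n - i) ^ ((1 / 4 - ε) * (2 * n - i)) ≤ (2 * n) ^ ((1 / 2 - 2 * ε) * n) := by
    convert rpow_mul_self_le_rpow_mul_self (e := 1 / 4 - ε) (by linarith) (by linarith)
      (by linarith [i.cast_nonneg (α := ℝ)] : 2 * n - i ≤ 2 * n) using 2
    ring
  have hsqrt : (i ! : ℝ) ^ ((1 : ℝ) / 2) ≤ n ^ (n / 2) :=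
    calc (i ! : ℝ) ^ ((1 : ℝ) / 2) ≤ (n ^ n) ^ ((1 : ℝ) / 2) := by gcongr
      _ = n ^ (n / 2) := by rw [← rpow_mul (by linarith)]; ring_nf
  have hab : a ^ (N - i) * b ^ i ≤ max a b ^ N :=
    calc a ^ (N - i) * b ^ i ≤ max a b ^ (N - i) * max a b ^ i := by
          gcongr
          exacts [le_max_left a b, le_max_right a b]
      _ = max a b ^ N := by rw [← pow_add, Nat.sub_add_cancel hi]
  calc assumptionATerm ε J a b N i
      = (2 * n - i) ^ ((1 / 4 - ε) * (2 * n - i)) * (N.choose i : ℝ) ^ 2 *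
          (i ! : ℝ) ^ ((1 : ℝ) / 2) * ((N + J - 1)! : ℝ) * (a ^ (N - i) * b ^ i) /
          (2 ^ (N - i) * (N ! : ℝ) ^ 2) := by
        unfold assumptionATerm; ring
    _ ≤ (2 * n) ^ ((1 / 2 - 2 * ε) * n) * (2 ^ N) ^ 2 * n ^ (n / 2) *
          (N ! * (n + J) ^ J) * max a b ^ N / (1 * (N ! : ℝ) ^ 2) := by
        gcongr
        exact one_le_pow₀ one_le_two
    _ = (2 * n) ^ ((1 / 2 - 2 * ε) * n) * n ^ (n / 2) *
          (4 ^ N * (n + J) ^ J * max a b ^ N) / N ! := by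
        rw [← pow_mul, pow_mul']
        field_simp
        norm_num [mul_comm]
    _ ≤ N ! * (2 * exp 1 * n ^ (-(2 * ε))) ^ N * (4 ^ N * (n + J) ^ J * max a b ^ N) / N ! := by
        gcongr ?_ * _ / _
    _ = (n + J) ^ J * (8 * exp 1 * max a b * n ^ (-(2 * ε))) ^ N := by
        field_simp
        rw [← mul_pow, ← mul_pow]
        ring

lemma tendsto_add_pow_mul_pow_mul_rpow_neg (c k : ℕ) (K : ℝ) {δ : ℝ} (hδ : 0 < δ) :
    Tendsto (fun N : ℕ => ((N : ℝ) + c) ^ k * (K * (N : ℝ) ^ (-δ)) ^ N) atTop (𝓝 0) := by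
  have hgeom : Tendsto (fun N : ℕ => ((N : ℝ) + c) ^ k * (1 / 2 : ℝ) ^ N) atTop (𝓝 0) := by
    have h := ((tendsto_pow_const_mul_const_pow_of_abs_lt_one k (r := 1 / 2)
      (by norm_num [abs_of_pos])).comp (tendsto_add_atTop_nat c)).const_mul ((2 : ℝ) ^ c)
    rw [mul_zero] at h
    refine h.congr fun N => ?_
    simp only [Function.comp, Nat.cast_add, pow_add]
    field_simp
    rw [mul_right_comm, ← mul_pow]
    norm_num
  have hsmall : Tendsto (fun N : ℕ => ‖K‖ * (N : ℝ) ^ (-δ)) atTop (𝓝 0) := by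
    simpa using ((tendsto_rpow_neg_atTop hδ).comp tendsto_natCast_atTop_atTop).const_mul ‖K‖
  refine squeeze_zero_norm' ?_ hgeom
  filter_upwards [hsmall.eventually (ge_mem_nhds (by norm_num : (0 : ℝ) < 1 / 2))] with N hN
  rw [norm_mul, norm_pow, norm_pow, norm_mul,
    Real.norm_of_nonneg (r := (N : ℝ) + c) (by positivity),
    Real.norm_of_nonneg (r := (N : ℝ) ^ (-δ)) (by positivity)]
  gcongr

theorem tendsto_sum_assumptionATerm {ε : ℝ} (hε : 0 < ε) (hε4 : ε ≤ 1 / 4) (J : ℕ) (a b : ℝ) :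
    Tendsto (fun N : ℕ => ∑ i ∈ range (N + 1), assumptionATerm ε J a b N i) atTop (𝓝 0) := by
  set K := 8 * exp 1 * max |a| |b|
  refine squeeze_zero_norm' ?_ (tendsto_add_pow_mul_pow_mul_rpow_neg (J + 1) (J + 1) K
    (by positivity : 0 < 2 * ε))
  filter_upwards [eventually_gt_atTop 0] with N hN
  calc ‖∑ i ∈ range (N + 1), assumptionATerm ε J a b N i‖
      ≤ ∑ i ∈ range (N + 1), |assumptionATerm ε J a b N i| := norm_sum_le _ _
    _ ≤ ∑ i ∈ range (N + 1), ((N : ℝ) + J) ^ J * (K * (N : ℝ) ^ (-(2 * ε))) ^ N := by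
        refine sum_le_sum fun i hi => ?_
        have hi : i ≤ N := Nat.lt_succ_iff.mp (mem_range.mp hi)
        rw [abs_assumptionATerm ε J a b hi]
        exact assumptionATerm_le hε.le hε4 J (abs_nonneg a) (abs_nonneg b) hN hi
    _ = ((N : ℝ) + 1) * ((N : ℝ) + J) ^ J * (K * (N : ℝ) ^ (-(2 * ε))) ^ N := by
        rw [sum_const, card_range, nsmul_eq_mul]; push_cast; ring
    _ ≤ ((N : ℝ) + (J + 1 : ℕ)) ^ (J + 1) * (K * (N : ℝ) ^ (-(2 * ε))) ^ N := by
        rw [_root_.pow_succ']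
        gcongr <;> push_cast <;> linarith [(J.cast_nonneg : (0 : ℝ) ≤ J)]

theorem tendsto_assumptionA_bound_general (H r T ε : ℝ) (J : ℕ) (hε : 0 < ε) (hε4 : ε ≤ 1 / 4) :
    Filter.Tendsto
      (fun N : ℕ => ∑ i ∈ Finset.range (N + 1),
        (2 * (N : ℝ) - i) ^ ((1 / 4 - ε) * (2 * (N : ℝ) - i)) *
          (N.choose i : ℝ) ^ 2 * (i.factorial : ℝ) ^ ((1 : ℝ) / 2) *
          ((N + J - 1).factorial : ℝ) / ((2 : ℝ) ^ (N - i) * (N.factorial : ℝ) ^ 2) *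
          (T ^ (2 * H) - r ^ (2 * H) + (T - r) ^ (2 * H)) ^ (N - i) *
          ((T - r) ^ H) ^ i)
      Filter.atTop (nhds 0) :=
  tendsto_sum_assumptionATerm hε hε4 J _ _

/-- Let `1/2 < H < 1`, `0 ≤ r < T`, `J ≥ 1`, `ε ∈ (0, 1/4]`.
With `a = T^(2H) - r^(2H) + (T-r)^(2H)` and `b = (T-r)^H`, the sequence
`a_N = ∑_{i=0}^{N} (2N-i)^{(1/4-ε)(2N-i)} C(N,i)² (i!)^{1/2} (N+J-1)! /
(2^{N-i} (N!)²) · a^{N-i} b^i` tends to `0` as `N → ∞`. -/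
theorem tendsto_assumptionA_bound (H r T ε : ℝ) (J : ℕ) (hH : 1 / 2 < H) (hH1 : H < 1)
    (hr : 0 ≤ r) (hrT : r < T) (hJ : 1 ≤ J) (hε : 0 < ε) (hε4 : ε ≤ 1 / 4) :
    Filter.Tendsto
      (fun N : ℕ => ∑ i ∈ Finset.range (N + 1),
        (2 * (N : ℝ) - i) ^ ((1 / 4 - ε) * (2 * (N : ℝ) - i)) *
          (N.choose i : ℝ) ^ 2 * (i.factorial : ℝ) ^ ((1 : ℝ) / 2) *
          ((N + J - 1).factorial : ℝ) / ((2 : ℝ) ^ (N - i) * (N.factorial : ℝ) ^ 2) *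
          (T ^ (2 * H) - r ^ (2 * H) + (T - r) ^ (2 * H)) ^ (N - i) *
          ((T - r) ^ H) ^ i)
      Filter.atTop (nhds 0) :=
  tendsto_assumptionA_bound_general H r T ε J hε hε4
end
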